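/- arXiv:2111.12801 — 6 statements merged into one kernel-verified Lean document; each statement's English description precedes it below -/
import Mathlib

section
/- Let f : X → Y be a map between finite closure spaces. Then f is an open map (the image of every open subset of X is open in Y) if and only if for every x ∈ X and every M ∈ 𝓜(x), the image f(M) is open in Y. -/
/-- The set of neighborhoods of a point `x` in a closure space with closure operator `c`:
`U` is a neighborhood of `x` if `x ∉ c (X \ U)`. -/
def nbhd {X : Type*} (c : Set X → Set X) (x : X) : Set (Set X) := {U | x ∉ c Uᶜ}

/-- The set `𝓜(x)` of minimal neighborhoods of `x` (minimal elements of `nbhd c x`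
under inclusion). -/
def minNbhd {X : Type*} (c : Set X → Set X) (x : X) : Set (Set X) :=
  {M | M ∈ nbhd c x ∧ ∀ U ∈ nbhd c x, U ⊆ M → U = M}

/-- A subset `U` is open in the closure space if its complement is closed. -/
def isOpenCS {X : Type*} (c : Set X → Set X) (U : Set X) : Prop := c Uᶜ = Uᶜ

/-- `A` converges to `x` if `A` is contained in some minimal neighborhood of `x`. -/
def conv {X : Type*} (c : Set X → Set X) (A : Set X) (x : X) : Prop :=
  ∃ M ∈ minNbhd c x, A ⊆ M

/-- `f` is an open map iff the image of every minimal neighborhood is open. -/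
theorem stmt_5 {X Y : Type*} [Fintype X] [Fintype Y]
    (cX : Set X → Set X) (cY : Set Y → Set Y)
    (hX1 : ∀ A : Set X, A ⊆ cX A)
    (hX2 : ∀ A B : Set X, A ⊆ B → cX A ⊆ cX B)
    (hX3 : ∀ A : Set X, cX (cX A) = cX A)
    (hY1 : ∀ A : Set Y, A ⊆ cY A)
    (hY2 : ∀ A B : Set Y, A ⊆ B → cY A ⊆ cY B)
    (hY3 : ∀ A : Set Y, cY (cY A) = cY A)
    (f : X → Y) :
    (∀ U : Set X, isOpenCS cX U → isOpenCS cY (f '' U)) ↔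
      (∀ x : X, ∀ M ∈ minNbhd cX x, isOpenCS cY (f '' M)) := by
  constructor
  · intro hopen x M hM
    apply hopen
    have hMnb : x ∉ cX Mᶜ := hM.1
    have h2 : (cX Mᶜ)ᶜ ⊆ M := by
      rw [Set.compl_subset_comm]; exact hX1 Mᶜ
    have h1 : (cX Mᶜ)ᶜ ∈ nbhd cX x := by
      simp only [nbhd, Set.mem_setOf_eq, compl_compl, hX3]
      exact hMnb
    have heq : (cX Mᶜ)ᶜ = M := hM.2 _ h1 h2
    show cX Mᶜ = Mᶜ
    rw [← heq, compl_compl, hX3]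
  · intro hmin U hU
    show cY (f '' U)ᶜ = (f '' U)ᶜ
    refine Set.Subset.antisymm ?_ (hY1 _)
    intro y hy hyU
    obtain ⟨x, hxU, rfl⟩ := hyU
    -- find minimal neighborhood of x inside U
    have hUnb : U ∈ nbhd cX x := by
      show x ∉ cX Uᶜ
      rw [hU]
      simpa using hxU
    set S : Set (Set X) := {V | V ∈ nbhd cX x ∧ V ⊆ U} with hS
    have hSfin : S.Finite := Set.toFinite S
    have hSne : S.Nonempty := ⟨U, hUnb, subset_rfl⟩
    obtain ⟨M, hMS, hMmin⟩ : ∃ M ∈ S, ∀ W ∈ S, W ⊆ M → M = W := by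
      obtain ⟨M, hMS, hM⟩ := Set.Finite.exists_minimalFor id S hSfin hSne
      exact ⟨M, hMS, fun W hW hWM => Set.Subset.antisymm (hM hW hWM) hWM⟩
    have hMmem : M ∈ minNbhd cX x := by
      refine ⟨hMS.1, fun W hW hWM => ?_⟩
      exact (hMmin W ⟨hW, hWM.trans hMS.2⟩ hWM).symm
    have hopenM := hmin x M hMmem
    have hsub : cY (f '' U)ᶜ ⊆ (f '' M)ᶜ := by
      rw [← hopenM]
      exact hY2 _ _ (Set.compl_subset_compl.mpr (Set.image_mono (f := f) hMS.2))
    have hxM : x ∈ M := by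
      by_contra hxM
      exact hMS.1 (hX1 Mᶜ hxM)
    exact hsub hy ⟨x, hxM, rfl⟩
end

section
/- Let f : X → Y be a map between finite closure spaces. Then f is continuous and open if and only if for every x ∈ X and every M ∈ 𝓜(x) one has f(M) ∈ 𝓜(f(x)). -/
/-- Neighborhoods are upward closed. -/
lemma nbhd_mono {X : Type*} {c : Set X → Set X} (h2 : ∀ A B : Set X, A ⊆ B → c A ⊆ c B)
    {x : X} {U V : Set X} (hUV : U ⊆ V) (hU : U ∈ nbhd c x) : V ∈ nbhd c x :=
  fun h => hU (h2 _ _ (Set.compl_subset_compl.mpr hUV) h)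

/-- A point belongs to each of its neighborhoods. -/
lemma mem_of_nbhd {X : Type*} {c : Set X → Set X} (h1 : ∀ A : Set X, A ⊆ c A)
    {x : X} {U : Set X} (hU : U ∈ nbhd c x) : x ∈ U := by
  by_contra h
  exact hU (h1 _ h)

/-- An open set is a neighborhood of each of its points. -/
lemma open_nbhd {X : Type*} {c : Set X → Set X} {U : Set X} (hU : isOpenCS c U)
    {x : X} (hx : x ∈ U) : U ∈ nbhd c x := by
  intro h
  rw [hU] at h
  exact h hx

/-- Minimal neighborhoods are open. -/
lemma minNbhd_open {X : Type*} {c : Set X → Set X}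
    (h1 : ∀ A : Set X, A ⊆ c A) (h2 : ∀ A B : Set X, A ⊆ B → c A ⊆ c B)
    (h3 : ∀ A : Set X, c (c A) = c A)
    {x : X} {M : Set X} (hM : M ∈ minNbhd c x) : isOpenCS c M := by
  obtain ⟨hMn, hmin⟩ := hM
  have hsub : (c Mᶜ)ᶜ ⊆ M := Set.compl_subset_comm.mp (h1 Mᶜ)
  have hn : (c Mᶜ)ᶜ ∈ nbhd c x := by
    simp only [nbhd, Set.mem_setOf_eq, compl_compl, h3]
    exact hMn
  have heq := hmin _ hn hsub
  have : c Mᶜ = Mᶜ := by rw [← compl_compl (c Mᶜ), heq]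
  exact this

/-- In a finite space, every neighborhood contains a minimal neighborhood. -/
lemma exists_minNbhd {X : Type*} [Fintype X] {c : Set X → Set X}
    {x : X} {U : Set X} (hU : U ∈ nbhd c x) :
    ∃ M ∈ minNbhd c x, M ⊆ U := by
  have hfin : {V | V ∈ nbhd c x ∧ V ⊆ U}.Finite := Set.toFinite _
  obtain ⟨M, hMs, hMmin⟩ := hfin.exists_minimal ⟨U, hU, subset_rfl⟩
  refine ⟨M, ⟨hMs.1, fun V hV hVM => ?_⟩, hMs.2⟩
  exact subset_antisymm hVM (hMmin ⟨hV, hVM.trans hMs.2⟩ hVM)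

/-- `f` is continuous and open iff images of minimal neighborhoods are minimal neighborhoods. -/
theorem stmt_6 {X Y : Type*} [Fintype X] [Fintype Y]
    (cX : Set X → Set X) (cY : Set Y → Set Y)
    (hX1 : ∀ A : Set X, A ⊆ cX A)
    (hX2 : ∀ A B : Set X, A ⊆ B → cX A ⊆ cX B)
    (hX3 : ∀ A : Set X, cX (cX A) = cX A)
    (hY1 : ∀ A : Set Y, A ⊆ cY A)
    (hY2 : ∀ A B : Set Y, A ⊆ B → cY A ⊆ cY B)
    (hY3 : ∀ A : Set Y, cY (cY A) = cY A)
    (f : X → Y) :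
    ((∀ x : X, ∀ M ∈ minNbhd cX x, ∃ N ∈ minNbhd cY (f x), f '' M ⊆ N) ∧
      (∀ U : Set X, isOpenCS cX U → isOpenCS cY (f '' U))) ↔
      (∀ x : X, ∀ M ∈ minNbhd cX x, f '' M ∈ minNbhd cY (f x)) := by
  constructor
  · rintro ⟨hcont, hopen⟩ x M hM
    have hMopen := minNbhd_open hX1 hX2 hX3 hM
    have hfMopen := hopen M hMopen
    have hxM : x ∈ M := mem_of_nbhd hX1 hM.1
    have hfMn : f '' M ∈ nbhd cY (f x) := open_nbhd hfMopen ⟨x, hxM, rfl⟩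
    refine ⟨hfMn, fun V hV hVM => ?_⟩
    obtain ⟨N, hN, hfMN⟩ := hcont x M hM
    have hVN : V = N := hN.2 V hV (hVM.trans hfMN)
    exact subset_antisymm hVM (hfMN.trans_eq hVN.symm)
  · intro h
    constructor
    · intro x M hM
      exact ⟨f '' M, h x M hM, subset_rfl⟩
    · intro U hU
      have key : ∀ y ∈ f '' U, f '' U ∈ nbhd cY y := by
        rintro y ⟨x, hxU, rfl⟩
        obtain ⟨M, hM, hMU⟩ := exists_minNbhd (open_nbhd hU hxU)
        exact nbhd_mono hY2 (Set.image_mono hMU) (h x M hM).1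
      apply subset_antisymm _ (hY1 _)
      intro y hy
      by_contra hyc
      simp only [Set.mem_compl_iff, not_not] at hyc
      exact key y hyc hy
end

section
/- Let X be a finite closure space, x ∈ X, M ∈ 𝓜(x), and y ∈ M. Then either M ∈ 𝓜(y), or M \ {x} is a neighborhood of y. -/
/-- If `M` is a minimal neighborhood of `x` and `y ∈ M`, then `M` is a minimal
neighborhood of `y`, or `M \ {x}` is a neighborhood of `y`. -/
theorem stmt_7 {X : Type*} [Fintype X] (c : Set X → Set X)
    (hc1 : ∀ A : Set X, A ⊆ c A)
    (hc2 : ∀ A B : Set X, A ⊆ B → c A ⊆ c B)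
    (hc3 : ∀ A : Set X, c (c A) = c A)
    (x : X) (M : Set X) (hM : M ∈ minNbhd c x) (y : X) (hy : y ∈ M) :
    M ∈ minNbhd c y ∨ (M \ {x}) ∈ nbhd c y := by
  obtain ⟨hMx, hmin⟩ := hM
  -- M is a neighborhood of y
  have hMy : M ∈ nbhd c y := by
    by_contra h
    have hyc : y ∈ c Mᶜ := not_not.mp h
    have hsub : (M \ {y})ᶜ = Mᶜ ∪ {y} := by
      rw [Set.diff_eq, Set.compl_inter, compl_compl]
    have hnb : (M \ {y}) ∈ nbhd c x := by
      simp only [nbhd, Set.mem_setOf_eq, hsub]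
      intro hx
      apply hMx
      have : c (Mᶜ ∪ {y}) ⊆ c Mᶜ := by
        rw [← hc3 Mᶜ]
        apply hc2
        intro z hz
        rcases hz with hz | hz
        · exact hc1 _ hz
        · rw [Set.mem_singleton_iff] at hz; subst hz; exact hyc
      exact this hx
    have := hmin _ hnb (Set.diff_subset)
    rw [← this] at hy
    exact hy.2 rfl
  by_cases hminy : M ∈ minNbhd c y
  · exact Or.inl hminy
  · right
    -- there is a strictly smaller neighborhood U of y
    have : ∃ U ∈ nbhd c y, U ⊆ M ∧ U ≠ M := by
      by_contra h
      push_neg at h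
      exact hminy ⟨hMy, fun U hU hUM => h U hU hUM⟩
    obtain ⟨U, hU, hUM, hUne⟩ := this
    obtain ⟨z, hzM, hzU⟩ : ∃ z, z ∈ M ∧ z ∉ U := by
      by_contra h
      push_neg at h
      exact hUne (Set.Subset.antisymm hUM (fun z hz => h z hz))
    -- x ∈ c (Mᶜ ∪ {z}) by minimality of M at x
    have hxz : x ∈ c (Mᶜ ∪ {z}) := by
      by_contra hx
      have hsub : (M \ {z})ᶜ = Mᶜ ∪ {z} := by
        rw [Set.diff_eq, Set.compl_inter, compl_compl]
      have hnb : (M \ {z}) ∈ nbhd c x := by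
        simp only [nbhd, Set.mem_setOf_eq, hsub]; exact hx
      have := hmin _ hnb (Set.diff_subset)
      rw [← this] at hzM
      exact hzM.2 rfl
    have hxU : x ∈ c Uᶜ := by
      apply hc2 (Mᶜ ∪ {z}) Uᶜ _ hxz
      intro w hw
      rcases hw with hw | hw
      · exact fun hwU => hw (hUM hwU)
      · rw [Set.mem_singleton_iff] at hw; subst hw; exact hzU
    -- conclude
    have hsub : (M \ {x})ᶜ = Mᶜ ∪ {x} := by
      rw [Set.diff_eq, Set.compl_inter, compl_compl]
    simp only [nbhd, Set.mem_setOf_eq, hsub]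
    intro hyc
    apply hU
    have h1 : c (Mᶜ ∪ {x}) ⊆ c (Uᶜ ∪ {x}) := by
      apply hc2
      apply Set.union_subset_union_left
      exact Set.compl_subset_compl.mpr hUM
    have h2 : c (Uᶜ ∪ {x}) ⊆ c Uᶜ := by
      rw [← hc3 Uᶜ]
      apply hc2
      intro w hw
      rcases hw with hw | hw
      · exact hc1 _ hw
      · rw [Set.mem_singleton_iff] at hw; subst hw; exact hxU
    exact h2 (h1 hyc)
end

section
/- Let X be a finite closure space with closure operator c. Then c is a topological (Kuratowski) closure, i.e. c(∅) = ∅ and c(A ∪ B) = c(A) ∪ c(B) for all A, B ⊆ X, if and only if every point of X is essential and for every x ∈ X and all A, B ⊆ X, A → x and B → x imply A ∪ B → x. -/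
/-- The closure operator of a finite closure space is a Kuratowski (topological) closure
iff every point is essential and convergence is closed under binary unions. -/
theorem stmt_9 {X : Type*} [Fintype X] (c : Set X → Set X)
    (hc1 : ∀ A : Set X, A ⊆ c A)
    (hc2 : ∀ A B : Set X, A ⊆ B → c A ⊆ c B)
    (hc3 : ∀ A : Set X, c (c A) = c A) :
    (c ∅ = ∅ ∧ ∀ A B : Set X, c (A ∪ B) = c A ∪ c B) ↔
      ((∀ x : X, x ∉ c ∅) ∧
        ∀ (x : X) (A B : Set X), conv c A x → conv c B x → conv c (A ∪ B) x) := by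
  constructor
  · rintro ⟨h0, hadd⟩
    refine ⟨fun x hx => by simp [h0] at hx, ?_⟩
    rintro x A B ⟨M₁, hM₁, hA⟩ ⟨M₂, hM₂, hB⟩
    have hint : M₁ ∩ M₂ ∈ nbhd c x := by
      simp only [nbhd, Set.mem_setOf_eq, Set.compl_inter, hadd, Set.mem_union]
      exact fun h => h.elim hM₁.1 hM₂.1
    have e1 : M₁ ∩ M₂ = M₁ := hM₁.2 _ hint Set.inter_subset_left
    have e2 : M₁ ∩ M₂ = M₂ := hM₂.2 _ hint Set.inter_subset_right
    exact ⟨M₁, hM₁, Set.union_subset hA ((e1.symm.trans e2) ▸ hB)⟩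
  · rintro ⟨hess, hconv⟩
    have h0 : c ∅ = ∅ := Set.eq_empty_iff_forall_notMem.2 hess
    have key : ∀ (x : X) (U : Set X), U ∈ nbhd c x → ∃ M ∈ minNbhd c x, M ⊆ U := by
      intro x U hU
      obtain ⟨M, ⟨hM, hMU⟩, hmin⟩ := Set.Finite.exists_minimalFor id
        {V | V ∈ nbhd c x ∧ V ⊆ U} (Set.toFinite _) ⟨U, hU, le_refl U⟩
      exact ⟨M, ⟨hM, fun V hV hVM => Set.Subset.antisymm hVM
        (hmin (show V ∈ {V | V ∈ nbhd c x ∧ V ⊆ U} from ⟨hV, hVM.trans hMU⟩) hVM)⟩, hMU⟩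
    refine ⟨h0, fun A B => Set.Subset.antisymm ?_
      (Set.union_subset (hc2 _ _ Set.subset_union_left) (hc2 _ _ Set.subset_union_right))⟩
    intro x hx
    by_contra hx'
    simp only [Set.mem_union, not_or] at hx'
    obtain ⟨hxA, hxB⟩ := hx'
    have hAn : Aᶜ ∈ nbhd c x := by simpa [nbhd] using hxA
    have hBn : Bᶜ ∈ nbhd c x := by simpa [nbhd] using hxB
    obtain ⟨M₁, hM₁, hM₁A⟩ := key x Aᶜ hAn
    obtain ⟨M₂, hM₂, hM₂B⟩ := key x Bᶜ hBn
    obtain ⟨M, hM, hsub⟩ := hconv x M₁ M₂ ⟨M₁, hM₁, subset_rfl⟩ ⟨M₂, hM₂, subset_rfl⟩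
    have e1 : M₁ = M := hM.2 M₁ hM₁.1 ((Set.subset_union_left).trans hsub)
    have e2 : M₂ = M := hM.2 M₂ hM₂.1 ((Set.subset_union_right).trans hsub)
    have hMA : A ∪ B ⊆ Mᶜ :=
      Set.union_subset (Set.subset_compl_comm.mp (e1 ▸ hM₁A))
        (Set.subset_compl_comm.mp (e2 ▸ hM₂B))
    exact hM.1 (hc2 _ _ hMA hx)
end

section
/- Let X be a finite closure space, x ∈ X and M ∈ 𝓜(x). Then M = { y ∈ X | ∃ N ∈ 𝓜(y), N ⊆ M }. (In the language of the topological resolution: π(U_{xM}) = M, where U_{xM} is the minimal open neighborhood of (x,M) in Top X and π the natural projection.) -/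
section ClosureSpace

variable {X : Type*} {c : Set X → Set X}

lemma mem_minNbhd_iff_minimal {x : X} {M : Set X} :
    M ∈ minNbhd c x ↔ Minimal (· ∈ nbhd c x) M := by
  simp only [minNbhd, minimal_iff, Set.mem_ofPred_eq, eq_comm]

lemma mem_of_mem_nbhd (hc1 : ∀ A : Set X, A ⊆ c A) {y : X} {U : Set X}
    (hU : U ∈ nbhd c y) : y ∈ U := by
  by_contra hy
  exact hU (hc1 Uᶜ hy)

lemma mem_nbhd_of_isOpenCS {y : X} {U : Set X} (hU : isOpenCS c U) (hy : y ∈ U) :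
    U ∈ nbhd c y := by
  change y ∉ c Uᶜ
  rw [hU]
  exact not_not_intro hy

lemma isOpenCS_of_mem_minNbhd (hc1 : ∀ A : Set X, A ⊆ c A) (hc3 : ∀ A : Set X, c (c A) = c A)
    {x : X} {M : Set X} (hM : M ∈ minNbhd c x) : isOpenCS c M := by
  have hint_nbhd : (c Mᶜ)ᶜ ∈ nbhd c x := by
    change x ∉ c (c Mᶜ)ᶜᶜ
    rw [compl_compl, hc3]
    exact hM.1
  have hint_sub : (c Mᶜ)ᶜ ⊆ M := Set.compl_subset_comm.mp (hc1 Mᶜ)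
  have hint_eq : (c Mᶜ)ᶜ = M := hM.2 _ hint_nbhd hint_sub
  exact (compl_eq_comm.mp hint_eq).symm

lemma exists_minNbhd_subset [Finite X] {y : X} {U : Set X} (hU : U ∈ nbhd c y) :
    ∃ N ∈ minNbhd c y, N ⊆ U := by
  obtain ⟨N, hNU, hN⟩ := exists_minimal_le_of_wellFoundedLT (· ∈ nbhd c y) U hU
  exact ⟨N, mem_minNbhd_iff_minimal.mpr hN, hNU⟩

end ClosureSpace

theorem stmt_12_general {X : Type*} [Fintype X] (c : Set X → Set X)
    (hc1 : ∀ A : Set X, A ⊆ c A)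
    (hc3 : ∀ A : Set X, c (c A) = c A)
    (x : X) (M : Set X) (hM : M ∈ minNbhd c x) :
    M = {y : X | ∃ N ∈ minNbhd c y, N ⊆ M} := by
  have hMopen : isOpenCS c M := isOpenCS_of_mem_minNbhd hc1 hc3 hM
  ext y
  constructor
  · intro hy
    exact exists_minNbhd_subset (mem_nbhd_of_isOpenCS hMopen hy)
  · rintro ⟨N, hN, hNM⟩
    exact hNM (mem_of_mem_nbhd hc1 hN.1)

/-- A minimal neighborhood `M` of `x` equals the set of points having a minimal
neighborhood contained in `M` (i.e. `π(U_{xM}) = M`). -/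
theorem stmt_12 {X : Type*} [Fintype X] (c : Set X → Set X)
    (hc1 : ∀ A : Set X, A ⊆ c A)
    (hc2 : ∀ A B : Set X, A ⊆ B → c A ⊆ c B)
    (hc3 : ∀ A : Set X, c (c A) = c A)
    (x : X) (M : Set X) (hM : M ∈ minNbhd c x) :
    M = {y : X | ∃ N ∈ minNbhd c y, N ⊆ M} :=
  stmt_12_general c hc1 hc3 x M hM
end

section
/- Let f : X → Y be a map between finite closure spaces. If f is continuous and open, then f is regular (regular at every point of X). -/
/-- A continuous and open map between finite closure spaces is regular. -/
theorem stmt_18 {X Y : Type*} [Fintype X] [Fintype Y]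
    (cX : Set X → Set X) (cY : Set Y → Set Y)
    (hX1 : ∀ A : Set X, A ⊆ cX A)
    (hX2 : ∀ A B : Set X, A ⊆ B → cX A ⊆ cX B)
    (hX3 : ∀ A : Set X, cX (cX A) = cX A)
    (hY1 : ∀ A : Set Y, A ⊆ cY A)
    (hY2 : ∀ A B : Set Y, A ⊆ B → cY A ⊆ cY B)
    (hY3 : ∀ A : Set Y, cY (cY A) = cY A)
    (f : X → Y)
    (hcont : ∀ x : X, ∀ M ∈ minNbhd cX x, ∃ N ∈ minNbhd cY (f x), f '' M ⊆ N)
    (hopen : ∀ U : Set X, isOpenCS cX U → isOpenCS cY (f '' U)) :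
    ∀ x : X, ∀ M ∈ minNbhd cX x, ∃ K ∈ minNbhd cY (f x),
      {U : Set Y | U ∈ nbhd cY (f x) ∧ f '' M ⊆ U} = {B : Set Y | K ⊆ B} := by
  intro x M hM
  obtain ⟨hMnb, hMmin⟩ := hM
  have hxM : x ∈ M := by
    by_contra h
    exact hMnb (hX1 Mᶜ h)
  -- interior of M is a neighborhood contained in M
  have hint_nb : (cX Mᶜ)ᶜ ∈ nbhd cX x := by
    simp only [nbhd, Set.mem_setOf_eq, compl_compl, hX3]
    exact hMnb
  have hint_sub : (cX Mᶜ)ᶜ ⊆ M := by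
    rw [Set.compl_subset_comm]
    exact hX1 Mᶜ
  have hMopen : isOpenCS cX M := by
    have := hMmin _ hint_nb hint_sub
    have : cX Mᶜ = Mᶜ := by
      rw [← compl_compl (cX Mᶜ), this]
    exact this
  have hfMopen : isOpenCS cY (f '' M) := hopen M hMopen
  have hfx : f x ∈ f '' M := ⟨x, hxM, rfl⟩
  have hfMnb : f '' M ∈ nbhd cY (f x) := by
    have h' : cY (f '' M)ᶜ = (f '' M)ᶜ := hfMopen
    simp only [nbhd, Set.mem_setOf_eq, h', Set.mem_compl_iff, not_not]
    exact hfx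
  obtain ⟨N, ⟨hNnb, hNmin⟩, hfMN⟩ := hcont x M ⟨hMnb, hMmin⟩
  have hEq : f '' M = N := hNmin _ hfMnb hfMN
  refine ⟨f '' M, ?_, ?_⟩
  · rw [hEq]; exact ⟨hNnb, hNmin⟩
  · ext B
    simp only [Set.mem_setOf_eq]
    constructor
    · rintro ⟨_, h⟩; exact h
    · intro h
      refine ⟨?_, h⟩
      simp only [nbhd, Set.mem_setOf_eq]
      intro hc
      have : cY Bᶜ ⊆ cY (f '' M)ᶜ := hY2 _ _ (Set.compl_subset_compl.mpr h)
      rw [hfMopen] at this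
      exact (this hc) hfx
end
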